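/- arXiv:0911.3491 — 11 statements merged into one kernel-verified Lean document; each statement's English description precedes it below -/
import Mathlib

section
/- Define a : ℕ → ℕ by a(1) = 7 and a(n) = a(n−1) + gcd(n, a(n−1)) for n ≥ 2. Then for every n ≥ 2, the difference a(n) − a(n−1) is either 1 or a prime. -/
private lemma minFac_odd_aux (n₀ : ℕ) (hn : 2 ≤ n₀) : (2 * n₀ - 1).minFac % 2 = 1 := by
  rcases Nat.even_or_odd ((2 * n₀ - 1).minFac) with he | ho
  · obtain ⟨c, hc⟩ := he
    have h2 : (2 : ℕ) ∣ (2 * n₀ - 1).minFac := ⟨c, by omega⟩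
    have := h2.trans (Nat.minFac_dvd (2 * n₀ - 1))
    omega
  · obtain ⟨c, hc⟩ := ho
    omega

private lemma gcd_one_lemma (n₀ s : ℕ) (hn : 2 ≤ n₀) (hs : 1 ≤ s)
    (hlt : 2 * s + 1 < (2 * n₀ - 1).minFac) :
    Nat.gcd (n₀ + s) (2 * n₀ - 1) = 1 := by
  by_contra hne
  set g := Nat.gcd (n₀ + s) (2 * n₀ - 1) with hg
  have hq : (g.minFac).Prime := Nat.minFac_prime hne
  have hq1 : g.minFac ∣ n₀ + s := (Nat.minFac_dvd g).trans (Nat.gcd_dvd_left _ _)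
  have hq2 : g.minFac ∣ 2 * n₀ - 1 := (Nat.minFac_dvd g).trans (Nat.gcd_dvd_right _ _)
  have hge : (2 * n₀ - 1).minFac ≤ g.minFac := Nat.minFac_le_of_dvd hq.two_le hq2
  have hq3 : g.minFac ∣ 2 * s + 1 := by
    have heq : 2 * (n₀ + s) - (2 * n₀ - 1) = 2 * s + 1 := by omega
    exact heq ▸ Nat.dvd_sub (Dvd.dvd.mul_left hq1 2) hq2
  have := Nat.le_of_dvd (by omega) hq3
  omega

private lemma gcd_p_lemma (n₀ h : ℕ) (hn : 2 ≤ n₀)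
    (hh : (2 * n₀ - 1).minFac = 2 * h + 1) :
    Nat.gcd (n₀ + h) (2 * n₀ - 1) = (2 * n₀ - 1).minFac := by
  set p := (2 * n₀ - 1).minFac with hpdef
  have hp : p.Prime := Nat.minFac_prime (by omega)
  have hpd : p ∣ 2 * n₀ - 1 := Nat.minFac_dvd _
  have hp3 : 3 ≤ p := by have := hp.two_le; have := minFac_odd_aux n₀ hn; omega
  have hdvd2 : p ∣ 2 * (n₀ + h) := by
    have heq : 2 * (n₀ + h) = (2 * n₀ - 1) + p := by omega
    rw [heq]
    exact Nat.dvd_add hpd dvd_rfl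
  have hdvd : p ∣ n₀ + h := by
    rcases (Nat.Prime.dvd_mul hp).mp hdvd2 with h2 | hx
    · have := Nat.le_of_dvd (by norm_num) h2
      omega
    · exact hx
  have hgd : Nat.gcd (n₀ + h) (2 * n₀ - 1) ∣ p := by
    have hd1 : Nat.gcd (n₀ + h) (2 * n₀ - 1) ∣ 2 * (n₀ + h) - (2 * n₀ - 1) :=
      Nat.dvd_sub (Dvd.dvd.mul_left (Nat.gcd_dvd_left _ _) 2) (Nat.gcd_dvd_right _ _)
    have heq : 2 * (n₀ + h) - (2 * n₀ - 1) = p := by omega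
    rwa [heq] at hd1
  exact Nat.dvd_antisymm hgd (Nat.dvd_gcd hdvd hpd)

theorem stmt2 (a : ℕ → ℕ) (h1 : a 1 = 7)
    (hrec : ∀ n, 2 ≤ n → a n = a (n - 1) + Nat.gcd n (a (n - 1))) :
    ∀ n, 2 ≤ n → a n - a (n - 1) = 1 ∨ Nat.Prime (a n - a (n - 1)) := by
  -- Block lemma: if a n₀ = 3 n₀ then a (n₀ + t) = 3 n₀ + t for t < h
  have block : ∀ n₀ h, 2 ≤ n₀ → (2 * n₀ - 1).minFac = 2 * h + 1 → a n₀ = 3 * n₀ →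
      ∀ t, t < h → a (n₀ + t) = 3 * n₀ + t := by
    intro n₀ h hn hh ha t
    induction t with
    | zero => intro _; simpa using ha
    | succ t ih =>
      intro ht
      have hprev : a (n₀ + t) = 3 * n₀ + t := ih (by omega)
      have hrec' := hrec (n₀ + (t + 1)) (by omega)
      have hsub : n₀ + (t + 1) - 1 = n₀ + t := by omega
      rw [hsub, hprev] at hrec'
      have hrw : 3 * n₀ + t = (2 * n₀ - 1) + (n₀ + (t + 1)) := by omega
      rw [hrw, Nat.gcd_add_self_right] at hrec'
      have hg1 : Nat.gcd (n₀ + (t + 1)) (2 * n₀ - 1) = 1 :=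
        gcd_one_lemma n₀ (t + 1) hn (by omega) (by omega)
      rw [hg1] at hrec'
      omega
  -- Step lemma
  have next : ∀ n₀ h, 2 ≤ n₀ → (2 * n₀ - 1).minFac = 2 * h + 1 → a n₀ = 3 * n₀ →
      a (n₀ + h) = 3 * (n₀ + h) ∧
      (∀ k, n₀ < k → k ≤ n₀ + h →
        a k - a (k - 1) = 1 ∨ Nat.Prime (a k - a (k - 1))) := by
    intro n₀ h hn hh ha
    have hp : (2 * n₀ - 1).minFac.Prime := Nat.minFac_prime (by omega)
    have hp3 : 3 ≤ (2 * n₀ - 1).minFac := by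
      have := hp.two_le; have := minFac_odd_aux n₀ hn; omega
    have h1h : 1 ≤ h := by omega
    have hprevh : a (n₀ + (h - 1)) = 3 * n₀ + (h - 1) :=
      block n₀ h hn hh ha (h - 1) (by omega)
    have hrech := hrec (n₀ + h) (by omega)
    have hsub : n₀ + h - 1 = n₀ + (h - 1) := by omega
    rw [hsub, hprevh] at hrech
    have heq : 3 * n₀ + (h - 1) = (2 * n₀ - 1) + (n₀ + h) := by omega
    rw [heq, Nat.gcd_add_self_right] at hrech
    have hgp : Nat.gcd (n₀ + h) (2 * n₀ - 1) = (2 * n₀ - 1).minFac := gcd_p_lemma n₀ h hn hh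
    rw [hgp] at hrech
    have hvalh : a (n₀ + h) = 3 * (n₀ + h) := by omega
    refine ⟨hvalh, ?_⟩
    intro k hk1 hk2
    have hks : k = n₀ + (k - n₀) := by omega
    set s := k - n₀ with hsdef
    have hs1 : 1 ≤ s := by omega
    have hsh : s ≤ h := by omega
    rcases eq_or_lt_of_le hsh with hse | hslt
    · right
      have hprev : a (k - 1) = 3 * n₀ + (h - 1) := by
        rw [show k - 1 = n₀ + (h - 1) by omega]
        exact hprevh
      have hval : a k = 3 * (n₀ + h) := by rw [show k = n₀ + h by omega]; exact hvalh
      have hd : a k - a (k - 1) = (2 * n₀ - 1).minFac := by rw [hval, hprev]; omega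
      rwa [hd]
    · left
      have hprev : a (k - 1) = 3 * n₀ + (s - 1) := by
        rw [show k - 1 = n₀ + (s - 1) by omega]
        exact block n₀ h hn hh ha (s - 1) (by omega)
      have hval : a k = 3 * n₀ + s := by
        rw [hks]; exact block n₀ h hn hh ha s hslt
      rw [hval, hprev]; omega
  -- Main induction on k - n₀
  have main : ∀ d n₀ k, 2 ≤ n₀ → a n₀ = 3 * n₀ → n₀ < k → k - n₀ ≤ d →
      a k - a (k - 1) = 1 ∨ Nat.Prime (a k - a (k - 1)) := by
    intro d
    induction d with
    | zero => intro n₀ k _ _ h1' h2'; omega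
    | succ d ih =>
      intro n₀ k hn ha hk hd
      have hp : (2 * n₀ - 1).minFac.Prime := Nat.minFac_prime (by omega)
      have hodd := minFac_odd_aux n₀ hn
      have hp3 : 3 ≤ (2 * n₀ - 1).minFac := by have := hp.two_le; omega
      obtain ⟨h, hh⟩ : ∃ h, (2 * n₀ - 1).minFac = 2 * h + 1 := ⟨((2 * n₀ - 1).minFac - 1) / 2, by omega⟩
      have h1h : 1 ≤ h := by omega
      obtain ⟨hvalh, hdiff⟩ := next n₀ h hn hh ha
      by_cases hcase : k ≤ n₀ + h
      · exact hdiff k hk hcase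
      · exact ih (n₀ + h) k (by omega) hvalh (by omega) (by omega)
  -- Initial values
  have ha2 : a 2 = 8 := by
    have := hrec 2 (by norm_num)
    simp only [show (2:ℕ) - 1 = 1 from rfl, h1] at this
    norm_num at this; exact this
  have ha3 : a 3 = 9 := by
    have := hrec 3 (by norm_num)
    simp only [show (3:ℕ) - 1 = 2 from rfl, ha2] at this
    norm_num at this; exact this
  have ha4 : a 4 = 10 := by
    have := hrec 4 (by norm_num)
    simp only [show (4:ℕ) - 1 = 3 from rfl, ha3] at this
    norm_num at this; exact this
  have ha5 : a 5 = 15 := by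
    have := hrec 5 (by norm_num)
    simp only [show (5:ℕ) - 1 = 4 from rfl, ha4] at this
    norm_num at this; exact this
  intro n hn
  rcases Nat.lt_or_ge n 6 with h6 | h6
  · interval_cases n
    · left; simp [ha2, h1]
    · left; simp [ha3, ha2]
    · left; simp [ha4, ha3]
    · right
      have hd5 : a 5 - a (5 - 1) = 5 := by simp [ha5, ha4]
      rw [hd5]; norm_num
  · exact main (n - 5) 5 n (by norm_num) (by rw [ha5]) (by omega) (by omega)
end

section
/- Define b : ℕ → ℕ by b(3) = 6 and b(n) = b(n−1) + gcd(n, b(n−1)) for n ≥ 4. Then for every n ≥ 4, the difference b(n) − b(n−1) is either 1 or a prime. -/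
theorem stmt3 (b : ℕ → ℕ) (h3 : b 3 = 6)
    (hrec : ∀ n, 4 ≤ n → b n = b (n - 1) + Nat.gcd n (b (n - 1))) :
    ∀ n, 4 ≤ n → b n - b (n - 1) = 1 ∨ Nat.Prime (b n - b (n - 1)) := by
  have gaux : ∀ a c : ℕ, Nat.gcd a (a + c) = Nat.gcd a c := fun a c => by
    rw [Nat.add_comm, Nat.gcd_add_self_right]
  have hb4 : b 4 = 8 := by
    have h := hrec 4 (by norm_num)
    norm_num [h3] at h
    exact h
  -- jump lemma
  have jump : ∀ N n, 4 ≤ N → Even N → N ≤ n →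
      (∀ m, N ≤ m → m ≤ n → b m = m + N) →
      Nat.gcd (n+1) (N-1) = 1 ∨
        (Nat.gcd (n+1) (N-1) = Nat.minFac (N-1) ∧ (Nat.minFac (N-1)).Prime ∧
          n + 1 = N + Nat.minFac (N-1) - 1) := by
    intro N n hN4 hNe hNn hinv
    by_cases h1 : Nat.gcd (n+1) (N-1) = 1
    · exact Or.inl h1
    right
    have hodd : ¬ 2 ∣ (N-1) := by
      rcases hNe with ⟨k, hk⟩
      omega
    have hp : (Nat.minFac (N-1)).Prime := Nat.minFac_prime (by omega)
    have hpdvd : Nat.minFac (N-1) ∣ N - 1 := Nat.minFac_dvd _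
    set p := Nat.minFac (N-1) with hp_def
    clear_value p
    have hp2 : 2 ≤ p := hp.two_le
    obtain ⟨q, hq, hqd⟩ := Nat.exists_prime_and_dvd h1
    have hqn : q ∣ n+1 := hqd.trans (Nat.gcd_dvd_left _ _)
    have hqN : q ∣ N-1 := hqd.trans (Nat.gcd_dvd_right _ _)
    have hpq : p ≤ q := hp_def ▸ Nat.minFac_le_of_dvd hq.two_le hqN
    -- earlier coprimality
    have hco : ∀ m, N < m → m ≤ n → Nat.gcd m (N-1) = 1 := by
      intro m hm1 hm2
      have hbm : b m = m + N := hinv m (by omega) hm2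
      have hbm1 : b (m-1) = (m-1) + N := hinv (m-1) (by omega) (by omega)
      have h := hrec m (by omega)
      rw [hbm, hbm1] at h
      have h2 : Nat.gcd m (m - 1 + N) = 1 := by omega
      have h3' : m - 1 + N = m + (N - 1) := by omega
      rw [h3', gaux] at h2
      exact h2
    -- upper bound : n+1 ≤ N+p-1
    have hub : n + 1 ≤ N + p - 1 := by
      by_contra hcon
      push_neg at hcon
      have h2 := hco (N + p - 1) (by omega) (by omega)
      have hdp : p ∣ N + p - 1 := by
        obtain ⟨c, hc⟩ := hpdvd
        exact ⟨c + 1, by rw [Nat.mul_add, Nat.mul_one, ← hc]; omega⟩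
      have hd1 : p ∣ Nat.gcd (N + p - 1) (N - 1) := Nat.dvd_gcd hdp hpdvd
      rw [h2] at hd1
      have := Nat.le_of_dvd Nat.one_pos hd1
      omega
    -- lower bound
    have hqd2 : q ∣ n + 2 - N := by
      have h := Nat.dvd_sub hqn hqN
      have e : n + 1 - (N - 1) = n + 2 - N := by omega
      rwa [e] at h
    have hqlb : q ≤ n + 2 - N := Nat.le_of_dvd (by omega) hqd2
    have heq : n + 1 = N + p - 1 := by omega
    refine ⟨?_, hp, heq⟩
    rw [heq]
    have e : N + p - 1 = p + (N - 1) := by omega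
    rw [e, Nat.gcd_add_self_left]
    exact Nat.gcd_eq_left hpdvd
  -- main invariant
  have key : ∀ n, 4 ≤ n → ∃ N, 4 ≤ N ∧ Even N ∧ N ≤ n ∧
      ∀ m, N ≤ m → m ≤ n → b m = m + N := by
    intro n hn
    induction n, hn using Nat.le_induction with
    | base =>
      refine ⟨4, le_refl _, by decide, le_refl _, ?_⟩
      intro m h1 h2
      have : m = 4 := le_antisymm h2 h1
      subst this
      omega
    | succ n hn ih =>
      obtain ⟨N, hN4, hNe, hNn, hinv⟩ := ih
      have hbn : b n = n + N := hinv n hNn le_rfl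
      have hrecn : b (n+1) = b n + Nat.gcd (n+1) (b n) := by
        have h := hrec (n+1) (by omega)
        simpa using h
      have hg : Nat.gcd (n+1) (b n) = Nat.gcd (n+1) (N-1) := by
        rw [hbn]
        have e : n + N = (n+1) + (N-1) := by omega
        rw [e, gaux]
      rcases jump N n hN4 hNe hNn hinv with h1 | ⟨hgp, hpp, heq⟩
      · refine ⟨N, hN4, hNe, by omega, ?_⟩
        intro m hm1 hm2
        rcases Nat.lt_or_ge m (n+1) with h | h
        · exact hinv m hm1 (by omega)
        · have : m = n+1 := by omega
          subst this
          rw [hrecn, hg, hbn, h1]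
          omega
      · -- reset at n+1
        set p := Nat.minFac (N-1) with hp_def
        clear_value p
        have hpodd : p % 2 = 1 := by
          rcases hpp.eq_two_or_odd with h | h
          · exfalso
            have h2 : (2:ℕ) ∣ N - 1 := by rw [← h, hp_def]; exact Nat.minFac_dvd _
            rcases hNe with ⟨k, hk⟩
            omega
          · exact h
        have hbn1 : b (n+1) = n + N + p := by
          rw [hrecn, hg, hgp, hbn]
        refine ⟨n+1, by omega, ?_, le_refl _, ?_⟩
        · rcases hNe with ⟨k, hk⟩
          exact ⟨k + p / 2, by omega⟩
        · intro m hm1 hm2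
          have : m = n+1 := le_antisymm hm2 hm1
          subst this
          omega
  -- conclude
  intro n hn
  rcases Nat.lt_or_ge n 5 with h5 | h5
  · have : n = 4 := by omega
    subst this
    norm_num [hb4, h3]
  · obtain ⟨N, hN4, hNe, hNn, hinv⟩ := key (n-1) (by omega)
    have hd : b n - b (n-1) = Nat.gcd n (b (n-1)) := by
      have h := hrec n (by omega)
      omega
    have hbn1 : b (n-1) = (n-1) + N := hinv (n-1) hNn le_rfl
    have hg : Nat.gcd n (b (n-1)) = Nat.gcd n (N-1) := by
      rw [hbn1]
      have e : n - 1 + N = n + (N-1) := by omega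
      rw [e, gaux]
    have e1 : n - 1 + 1 = n := by omega
    rcases jump N (n-1) hN4 hNe hNn hinv with h1 | ⟨hgp, hpp, _⟩
    · rw [e1] at h1
      left
      rw [hd, hg, h1]
    · rw [e1] at hgp
      right
      rw [hd, hg, hgp]
      exact hpp
end

section
/- Define a : ℕ → ℕ by a(1) = 7 and, for n ≥ 2, a(n) = a(n−1) + 1 if gcd(n, a(n−1)) = 1, and a(n) = 3n otherwise. Then for every n ≥ 2, the difference a(n) − a(n−1) is either 1 or a prime. -/
/-- Invariant: `a n = 2*m + n` for some `3 ≤ m ≤ n`, with all `k ∈ (m, n]`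
coprime to `2*m - 1`. -/
def SeqInv (a : ℕ → ℕ) (n : ℕ) : Prop :=
  ∃ m, 3 ≤ m ∧ m ≤ n ∧ a n = 2 * m + n ∧
    ∀ k, m < k → k ≤ n → Nat.gcd k (2 * m - 1) = 1

lemma step (a : ℕ → ℕ)
    (hrec : ∀ n, 2 ≤ n →
      a n = if Nat.gcd n (a (n - 1)) = 1 then a (n - 1) + 1 else 3 * n)
    (n : ℕ) (hn : 3 ≤ n) (hinv : SeqInv a n) :
    SeqInv a (n + 1) ∧ (a (n + 1) - a n = 1 ∨ Nat.Prime (a (n + 1) - a n)) := by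
  obtain ⟨m, hm3, hmn, han, hclean⟩ := hinv
  have hrec' := hrec (n + 1) (by omega)
  have hsub : n + 1 - 1 = n := by omega
  rw [hsub] at hrec'
  have hg : Nat.gcd (n + 1) (a n) = Nat.gcd (n + 1) (2 * m - 1) := by
    rw [han]
    have h2 : 2 * m + n = (2 * m - 1) + (n + 1) := by omega
    rw [h2, Nat.gcd_add_self_right]
  by_cases hc : Nat.gcd (n + 1) (2 * m - 1) = 1
  · -- coprime: a (n+1) = a n + 1
    have hc' : Nat.gcd (n + 1) (a n) = 1 := by rw [hg]; exact hc
    have ha1 : a (n + 1) = a n + 1 := by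
      rw [hrec', if_pos hc']
    constructor
    · refine ⟨m, hm3, by omega, by omega, ?_⟩
      intro k hk1 hk2
      rcases Nat.lt_or_ge k (n + 1) with h | h
      · exact hclean k hk1 (by omega)
      · have : k = n + 1 := by omega
        rw [this]; exact hc
    · left; omega
  · -- else branch: a (n+1) = 3*(n+1), difference is prime
    have hc' : ¬ Nat.gcd (n + 1) (a n) = 1 := by rw [hg]; exact hc
    have ha1 : a (n + 1) = 3 * (n + 1) := by
      rw [hrec', if_neg hc']
    have hdpos : Nat.gcd (n + 1) (2 * m - 1) ≠ 0 := by
      intro h0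
      have := Nat.eq_zero_of_gcd_eq_zero_left h0
      omega
    set d := Nat.gcd (n + 1) (2 * m - 1) with hd
    set p := Nat.minFac d with hp
    have hpp : Nat.Prime p := Nat.minFac_prime hc
    have hpd : p ∣ d := Nat.minFac_dvd d
    have hpn : p ∣ n + 1 := hpd.trans (Nat.gcd_dvd_left _ _)
    have hpm : p ∣ 2 * m - 1 := hpd.trans (Nat.gcd_dvd_right _ _)
    have hp2 : 2 ≤ p := hpp.two_le
    -- p is odd
    have hpodd : p ≠ 2 := by
      intro h2
      rw [h2] at hpm
      obtain ⟨c, hcc⟩ := hpm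
      omega
    -- p ≥ n + 1 - m
    have hplarge : n + 1 - m ≤ p := by
      by_contra hlt
      push_neg at hlt
      have hk1 : m < n + 1 - p := by omega
      have hk2 : n + 1 - p ≤ n := by omega
      have hcln := hclean (n + 1 - p) hk1 hk2
      have hpk : p ∣ n + 1 - p := Nat.dvd_sub hpn dvd_rfl
      have : p ∣ Nat.gcd (n + 1 - p) (2 * m - 1) := Nat.dvd_gcd hpk hpm
      rw [hcln] at this
      have := Nat.le_of_dvd (by norm_num) this
      omega
    -- the difference
    have hdiff : a (n + 1) - a n = 2 * (n + 1 - m) + 1 := by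
      rw [ha1, han]; omega
    have hpdiff : p ∣ 2 * (n + 1 - m) + 1 := by
      have h2n : p ∣ 2 * (n + 1) := Dvd.dvd.mul_left hpn 2
      have heq : 2 * (n + 1 - m) + 1 = 2 * (n + 1) - (2 * m - 1) := by omega
      rw [heq]
      exact Nat.dvd_sub h2n hpm
    obtain ⟨c, hcc⟩ := hpdiff
    have hc1 : c = 1 := by
      rcases Nat.eq_zero_or_pos c with h | h
      · rw [h, mul_zero] at hcc; omega
      · by_contra hne
        have hc2 : 2 ≤ c := by omega
        -- p * c is odd, so c is odd, hence c ≥ 3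
        have hcodd : c % 2 = 1 := by
          rcases Nat.even_or_odd c with he | ho
          · obtain ⟨t, ht⟩ := he
            rw [ht, Nat.mul_add] at hcc
            omega
          · obtain ⟨t, ht⟩ := ho
            omega
        have hc3 : 3 ≤ c := by omega
        nlinarith
    have hprime : Nat.Prime (2 * (n + 1 - m) + 1) := by
      rw [hcc, hc1, mul_one]; exact hpp
    constructor
    · refine ⟨n + 1, by omega, le_refl _, by rw [ha1]; ring, ?_⟩
      intro k hk1 hk2
      omega
    · right; rw [hdiff]; exact hprime

lemma seqinv_all (a : ℕ → ℕ) (h1 : a 1 = 7)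
    (hrec : ∀ n, 2 ≤ n →
      a n = if Nat.gcd n (a (n - 1)) = 1 then a (n - 1) + 1 else 3 * n) :
    ∀ n, 3 ≤ n → SeqInv a n := by
  have ha2 : a 2 = 8 := by
    have h := hrec 2 (by norm_num)
    norm_num [h1] at h
    exact h
  have ha3 : a 3 = 9 := by
    have h := hrec 3 (by norm_num)
    norm_num [ha2] at h
    exact h
  intro n hn
  induction n, hn using Nat.le_induction with
  | base => exact ⟨3, by norm_num, by norm_num, by omega, fun k hk1 hk2 => by omega⟩
  | succ n hn ih => exact (step a hrec n hn ih).1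

theorem stmt4 (a : ℕ → ℕ) (h1 : a 1 = 7)
    (hrec : ∀ n, 2 ≤ n →
      a n = if Nat.gcd n (a (n - 1)) = 1 then a (n - 1) + 1 else 3 * n) :
    ∀ n, 2 ≤ n → a n - a (n - 1) = 1 ∨ Nat.Prime (a n - a (n - 1)) := by
  have ha2 : a 2 = 8 := by
    have h := hrec 2 (by norm_num)
    norm_num [h1] at h
    exact h
  have ha3 : a 3 = 9 := by
    have h := hrec 3 (by norm_num)
    norm_num [ha2] at h
    exact h
  intro n hn
  rcases Nat.lt_or_ge n 4 with h4 | h4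
  · interval_cases n
    · left; norm_num [h1, ha2]
    · left; norm_num [ha2, ha3]
  · have hinv := seqinv_all a h1 hrec (n - 1) (by omega)
    have hstep := (step a hrec (n - 1) (by omega) hinv).2
    have : n - 1 + 1 = n := by omega
    rw [this] at hstep
    exact hstep
end

section
/- Define b : ℕ → ℕ by b(3) = 6 and, for n ≥ 4, b(n) = b(n−1) + 1 if gcd(n, b(n−1)) = 1, and b(n) = 2n otherwise. Then for every n ≥ 4, the difference b(n) − b(n−1) is either 1 or a prime. -/
theorem stmt5_inv (b : ℕ → ℕ) (h3 : b 3 = 6)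
    (hrec : ∀ n, 4 ≤ n →
      b n = if Nat.gcd n (b (n - 1)) = 1 then b (n - 1) + 1 else 2 * n) :
    ∀ n, 3 ≤ n → ∃ m, 3 ≤ m ∧ m ≤ n ∧ b n = m + n ∧
      ∀ j, m < j → j ≤ n → Nat.gcd j (m - 1) = 1 := by
  intro n hn
  induction n, hn using Nat.le_induction with
  | base => exact ⟨3, le_refl 3, le_refl 3, by omega, fun j h1 h2 => by omega⟩
  | succ n hn ih =>
    obtain ⟨m, hm3, hmn, hbn, hcop⟩ := ih
    have hr := hrec (n + 1) (by omega)
    simp only [Nat.add_sub_cancel] at hr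
    have hg : Nat.gcd (n + 1) (b n) = Nat.gcd (n + 1) (m - 1) := by
      rw [hbn, show m + n = (m - 1) + (n + 1) by omega, Nat.gcd_add_self_right]
    by_cases h1 : Nat.gcd (n + 1) (m - 1) = 1
    · refine ⟨m, hm3, by omega, ?_, ?_⟩
      · rw [hr, if_pos (by rw [hg]; exact h1), hbn]; omega
      · intro j hj1 hj2
        rcases Nat.lt_or_ge j (n + 1) with h | h
        · exact hcop j hj1 (by omega)
        · have : j = n + 1 := by omega
          rw [this]; exact h1
    · refine ⟨n + 1, by omega, le_refl _, ?_, fun j h1 h2 => by omega⟩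
      rw [hr, if_neg (by rw [hg]; exact h1)]; omega

theorem stmt5 (b : ℕ → ℕ) (h3 : b 3 = 6)
    (hrec : ∀ n, 4 ≤ n →
      b n = if Nat.gcd n (b (n - 1)) = 1 then b (n - 1) + 1 else 2 * n) :
    ∀ n, 4 ≤ n → b n - b (n - 1) = 1 ∨ Nat.Prime (b n - b (n - 1)) := by
  intro n hn
  obtain ⟨m, hm3, hmn, hbn, hcop⟩ := stmt5_inv b h3 hrec (n - 1) (by omega)
  have hr := hrec n hn
  have hg : Nat.gcd n (b (n - 1)) = Nat.gcd n (m - 1) := by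
    rw [hbn, show m + (n - 1) = (m - 1) + n by omega, Nat.gcd_add_self_right]
  by_cases h1 : Nat.gcd n (m - 1) = 1
  · left
    rw [hr, if_pos (by rw [hg]; exact h1)]
    omega
  · right
    rw [hr, if_neg (by rw [hg]; exact h1), hbn]
    -- 2*n - (m + (n-1)) = n - m + 1
    have hd : 2 * n - (m + (n - 1)) = n - m + 1 := by omega
    rw [hd]
    -- get a prime r dividing gcd n (m-1)
    obtain ⟨r, hrp, hrd⟩ := Nat.exists_prime_and_dvd h1
    have hrn : r ∣ n := hrd.trans (Nat.gcd_dvd_left _ _)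
    have hrm : r ∣ m - 1 := hrd.trans (Nat.gcd_dvd_right _ _)
    have hrdiff : r ∣ n - m + 1 := by
      have h := Nat.dvd_sub hrn hrm
      have heq : n - (m - 1) = n - m + 1 := by omega
      rwa [heq] at h
    have hle : n - m + 1 ≤ r := by
      by_contra hlt
      push_neg at hlt
      have hj := hcop (m - 1 + r) (by have := hrp.two_le; omega) (by omega)
      have hdg : r ∣ Nat.gcd (m - 1 + r) (m - 1) :=
        Nat.dvd_gcd (Nat.dvd_add hrm dvd_rfl) hrm
      rw [hj] at hdg
      have := Nat.le_of_dvd one_pos hdg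
      have := hrp.two_le
      omega
    have : n - m + 1 = r := Nat.le_antisymm hle (Nat.le_of_dvd (by omega) hrdiff)
    rw [this]; exact hrp
end

section
/- Fix n₁ ≥ 2. Define a : ℕ → ℕ for n ≥ n₁ by a(n₁) = 3n₁ and, for n ≥ n₁+1, a(n) = a(n−1) + 1 if gcd(n, a(n−1)) = 1, and a(n) = 3n otherwise. Then for every n ≥ n₁+1, the difference a(n) − a(n−1) is either 1 or a prime. -/
theorem stmt6 (n₁ : ℕ) (hn₁ : 2 ≤ n₁) (a : ℕ → ℕ) (hinit : a n₁ = 3 * n₁)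
    (hrec : ∀ n, n₁ + 1 ≤ n →
      a n = if Nat.gcd n (a (n - 1)) = 1 then a (n - 1) + 1 else 3 * n) :
    ∀ n, n₁ + 1 ≤ n → a n - a (n - 1) = 1 ∨ Nat.Prime (a n - a (n - 1)) := by
  -- invariant
  have inv : ∀ n, n₁ ≤ n → ∃ m, n₁ ≤ m ∧ m ≤ n ∧ a n = 2 * m + n ∧
      ∀ k, m < k → k ≤ n → Nat.gcd k (2 * m - 1) = 1 := by
    intro n
    induction n with
    | zero => intro h; omega
    | succ n ih =>
      intro hn
      rcases eq_or_lt_of_le hn with heq | hlt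
      · subst heq
        refine ⟨n + 1, le_refl _, le_refl _, by omega, ?_⟩
        intro k hk1 hk2
        omega
      · have hn' : n₁ ≤ n := by omega
        obtain ⟨m, hm1, hm2, hm3, hm4⟩ := ih hn'
        have hrec' := hrec (n + 1) (by omega)
        simp only [Nat.add_sub_cancel] at hrec'
        have hgcd : Nat.gcd (n + 1) (a n) = Nat.gcd (n + 1) (2 * m - 1) := by
          have : a n = (2 * m - 1) + (n + 1) := by omega
          rw [this, Nat.gcd_add_self_right]
        simp only [hgcd] at hrec'
        by_cases hg : Nat.gcd (n + 1) (2 * m - 1) = 1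
        · rw [if_pos hg] at hrec'
          refine ⟨m, hm1, by omega, by omega, ?_⟩
          intro k hk1 hk2
          rcases Nat.lt_or_ge k (n + 1) with h | h
          · exact hm4 k hk1 (by omega)
          · have : k = n + 1 := by omega
            rw [this]; exact hg
        · rw [if_neg hg] at hrec'
          refine ⟨n + 1, by omega, le_refl _, by omega, ?_⟩
          intro k hk1 hk2
          omega
  intro n hn
  have hn1 : n₁ ≤ n - 1 := by omega
  obtain ⟨m, hm1, hm2, hm3, hm4⟩ := inv (n - 1) hn1
  have hrec' := hrec n hn
  have hgcd : Nat.gcd n (a (n - 1)) = Nat.gcd n (2 * m - 1) := by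
    have : a (n - 1) = (2 * m - 1) + n := by omega
    rw [this, Nat.gcd_add_self_right]
  simp only [hgcd] at hrec'
  by_cases hg : Nat.gcd n (2 * m - 1) = 1
  · rw [if_pos hg] at hrec'
    left; omega
  · rw [if_neg hg] at hrec'
    right
    set q := (Nat.gcd n (2 * m - 1)).minFac with hq
    have hqp : q.Prime := Nat.minFac_prime hg
    have hqn : q ∣ n := (Nat.minFac_dvd _).trans (Nat.gcd_dvd_left _ _)
    have hqm : q ∣ (2 * m - 1) := (Nat.minFac_dvd _).trans (Nat.gcd_dvd_right _ _)
    have hq3 : 3 ≤ q := by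
      rcases hqp.two_le.lt_or_eq with h | h
      · omega
      · exfalso
        obtain ⟨c, hc⟩ := hqm
        rw [← h] at hc
        omega
    -- n - m ≤ q
    have hmn : m < n := by omega
    have hnm : n - m ≤ q := by
      by_contra h
      push_neg at h
      have hk : q ∣ n - q := Nat.dvd_sub hqn dvd_rfl
      have h4 := hm4 (n - q) (by omega) (by omega)
      have : q ∣ Nat.gcd (n - q) (2 * m - 1) := Nat.dvd_gcd hk hqm
      rw [h4] at this
      exact absurd (Nat.le_of_dvd one_pos this) (by omega)
    have hd : a n - a (n - 1) = 2 * n - (2 * m - 1) := by omega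
    have hqd : q ∣ a n - a (n - 1) := by
      rw [hd]
      exact Nat.dvd_sub (Dvd.dvd.mul_left hqn 2) hqm
    obtain ⟨c, hc⟩ := hqd
    have hd2 : a n - a (n - 1) = 2 * (n - m) + 1 := by omega
    have hub : a n - a (n - 1) ≤ 2 * q + 1 := by omega
    rcases c with _ | _ | _ | c
    · omega
    · have : a n - a (n - 1) = q := by omega
      rw [this]; exact hqp
    · exfalso; omega
    · exfalso
      have hc' : a n - a (n - 1) = q * (c + 3) := by rw [hc]
      have h3 : q * 3 ≤ q * (c + 3) := Nat.mul_le_mul_left q (by omega)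
      omega
end

section
/- Fix n₁ ≥ 3. Define b : ℕ → ℕ for n ≥ n₁ by b(n₁) = 2n₁ and, for n ≥ n₁+1, b(n) = b(n−1) + 1 if gcd(n, b(n−1)) = 1, and b(n) = 2n otherwise. Then for every n ≥ n₁+1, the difference b(n) − b(n−1) is either 1 or a prime. -/
theorem stmt7 (n₁ : ℕ) (hn₁ : 3 ≤ n₁) (b : ℕ → ℕ) (hinit : b n₁ = 2 * n₁)
    (hrec : ∀ n, n₁ + 1 ≤ n →
      b n = if Nat.gcd n (b (n - 1)) = 1 then b (n - 1) + 1 else 2 * n) :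
    ∀ n, n₁ + 1 ≤ n → b n - b (n - 1) = 1 ∨ Nat.Prime (b n - b (n - 1)) := by
  have key : ∀ n, n₁ ≤ n → ∃ n₀, n₁ ≤ n₀ ∧ n₀ ≤ n ∧ b n = n + n₀ ∧
      ∀ m, n₀ < m → m ≤ n → Nat.gcd m (n₀ - 1) = 1 := by
    intro n
    induction n with
    | zero => intro h; omega
    | succ k ih =>
      intro h
      rcases Nat.lt_or_ge k n₁ with hk | hk
      · have hkn : k + 1 = n₁ := by omega
        refine ⟨k + 1, by omega, le_refl _, by rw [hkn, hinit]; omega,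
          fun m h1 h2 => by omega⟩
      · obtain ⟨n₀, h1, h2, h3, h4⟩ := ih hk
        have hb := hrec (k + 1) (by omega)
        simp only [Nat.add_sub_cancel] at hb
        by_cases hg : Nat.gcd (k + 1) (b k) = 1
        · refine ⟨n₀, h1, by omega, ?_, ?_⟩
          · rw [hb, if_pos hg, h3]; omega
          · intro m hm1 hm2
            rcases eq_or_lt_of_le hm2 with he | hl
            · subst he
              have heq : k + n₀ = (n₀ - 1) + (k + 1) := by omega
              rw [h3, heq, Nat.gcd_add_self_right] at hg
              exact hg
            · exact h4 m hm1 (by omega)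
        · exact ⟨k + 1, by omega, le_refl _, by rw [hb, if_neg hg]; omega,
            fun m hm1 hm2 => by omega⟩
  intro n hn
  have hb := hrec n hn
  by_cases hg : Nat.gcd n (b (n - 1)) = 1
  · left; rw [hb, if_pos hg]; omega
  · right
    obtain ⟨n₀, h1, h2, h3, h4⟩ := key (n - 1) (by omega)
    have hrw : Nat.gcd n (b (n - 1)) = Nat.gcd n (n₀ - 1) := by
      rw [h3]
      have heq : n - 1 + n₀ = (n₀ - 1) + n := by omega
      rw [heq, Nat.gcd_add_self_right]
    set q := Nat.minFac (Nat.gcd n (n₀ - 1)) with hq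
    have hgcdne : Nat.gcd n (n₀ - 1) ≠ 1 := by rw [← hrw]; exact hg
    have hqp : q.Prime := Nat.minFac_prime hgcdne
    have hq1 : q ∣ n := (Nat.minFac_dvd _).trans (Nat.gcd_dvd_left _ _)
    have hq2 : q ∣ n₀ - 1 := (Nat.minFac_dvd _).trans (Nat.gcd_dvd_right _ _)
    have hq2' : 2 ≤ q := hqp.two_le
    have hle : n ≤ n₀ - 1 + q := by
      by_contra hlt
      push_neg at hlt
      have h5 := h4 (n₀ - 1 + q) (by omega) (by omega)
      have hdvd : q ∣ Nat.gcd (n₀ - 1 + q) (n₀ - 1) :=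
        Nat.dvd_gcd (Dvd.dvd.add hq2 dvd_rfl) hq2
      rw [h5] at hdvd
      have := Nat.le_of_dvd one_pos hdvd
      omega
    have hge : n₀ - 1 + q ≤ n := by
      have hd : q ∣ n - (n₀ - 1) := Nat.dvd_sub hq1 hq2
      have hpos : 0 < n - (n₀ - 1) := by omega
      have := Nat.le_of_dvd hpos hd
      omega
    rw [hb, if_neg hg, h3]
    have heq : 2 * n - (n - 1 + n₀) = q := by omega
    rw [heq]; exact hqp
end

section
/- Fix n₁ ≥ 3 and let k be the smallest positive integer such that gcd(n₁+k, 2n₁+k−1) > 1. Then k+1 equals the smallest prime divisor of n₁−1. -/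
lemma gcd_transform (n₁ m : ℕ) (hn₁ : 3 ≤ n₁) :
    Nat.gcd (n₁ + m) (2 * n₁ + m - 1) = Nat.gcd (m + 1) (n₁ - 1) := by
  have h1 : 2 * n₁ + m - 1 = (n₁ - 1) + (n₁ + m) := by omega
  have h2 : n₁ + m = (m + 1) + (n₁ - 1) := by omega
  rw [h1, Nat.gcd_add_self_right, h2, Nat.gcd_add_self_left]

theorem stmt8 (n₁ k : ℕ) (hn₁ : 3 ≤ n₁) (hk : 1 ≤ k)
    (hgcd : 1 < Nat.gcd (n₁ + k) (2 * n₁ + k - 1))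
    (hmin : ∀ j, 1 ≤ j → j < k → Nat.gcd (n₁ + j) (2 * n₁ + j - 1) = 1) :
    k + 1 = (n₁ - 1).minFac := by
  rw [gcd_transform n₁ k hn₁] at hgcd
  set p := (n₁ - 1).minFac with hp
  have hpp : p.Prime := Nat.minFac_prime (by omega)
  -- p ≤ k + 1
  have hq := Nat.minFac_prime (by omega : Nat.gcd (k+1) (n₁-1) ≠ 1)
  have hqd := Nat.minFac_dvd (Nat.gcd (k+1) (n₁-1))
  have hq1 : (Nat.gcd (k+1) (n₁-1)).minFac ∣ k + 1 :=
    hqd.trans (Nat.gcd_dvd_left _ _)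
  have hq2 : (Nat.gcd (k+1) (n₁-1)).minFac ∣ n₁ - 1 :=
    hqd.trans (Nat.gcd_dvd_right _ _)
  have hple : p ≤ (Nat.gcd (k+1) (n₁-1)).minFac := Nat.minFac_le_of_dvd hq.two_le hq2
  have hle : p ≤ k + 1 := hple.trans (Nat.le_of_dvd (by omega) hq1)
  -- k + 1 ≤ p
  by_contra hne
  have hlt : p < k + 1 := lt_of_le_of_ne hle (fun h => hne h.symm)
  have h2 := hpp.two_le
  have hone := hmin (p - 1) (by omega) (by omega)
  rw [gcd_transform n₁ (p-1) hn₁] at hone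
  have heq : p - 1 + 1 = p := by omega
  rw [heq] at hone
  have hdvd : p ∣ Nat.gcd p (n₁ - 1) := Nat.dvd_gcd dvd_rfl (Nat.minFac_dvd _)
  rw [hone] at hdvd
  exact absurd (Nat.le_of_dvd one_pos hdvd) (by omega)
end

section
/- Fix n₁ ≥ 2 and let k be the smallest positive integer such that gcd(n₁+k, 3n₁+k−1) > 1. Then 2k+1 equals the smallest prime divisor of 2n₁−1. -/
theorem stmt9 (n₁ k : ℕ) (hn₁ : 2 ≤ n₁) (hk : 1 ≤ k)
    (hgcd : 1 < Nat.gcd (n₁ + k) (3 * n₁ + k - 1))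
    (hmin : ∀ j, 1 ≤ j → j < k → Nat.gcd (n₁ + j) (3 * n₁ + j - 1) = 1) :
    2 * k + 1 = (2 * n₁ - 1).minFac := by
  set N := 2 * n₁ - 1 with hN
  have hN3 : 3 ≤ N := by omega
  have hNodd : N % 2 = 1 := by omega
  set p := N.minFac with hp
  have hpp : p.Prime := Nat.minFac_prime (by omega)
  have hpd : p ∣ N := Nat.minFac_dvd N
  have hpne2 : p ≠ 2 := by
    intro h
    rw [h] at hpd
    omega
  have hp2 : p % 2 = 1 := Nat.odd_iff.mp (hpp.odd_of_ne_two hpne2)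
  have hp3 : 3 ≤ p := by have := hpp.two_le; omega
  -- the prime q dividing the gcd
  set g := Nat.gcd (n₁ + k) (3 * n₁ + k - 1) with hg
  set q := g.minFac with hq
  have hqp : q.Prime := Nat.minFac_prime (by omega)
  have hq1 : q ∣ n₁ + k := (Nat.minFac_dvd g).trans (Nat.gcd_dvd_left _ _)
  have hq2 : q ∣ 3 * n₁ + k - 1 := (Nat.minFac_dvd g).trans (Nat.gcd_dvd_right _ _)
  have hqN : q ∣ N := by
    have h := Nat.dvd_sub hq2 hq1
    have e : 3 * n₁ + k - 1 - (n₁ + k) = N := by omega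
    rwa [e] at h
  have hqmul : q ∣ N + (2 * k + 1) := by
    have e : N + (2 * k + 1) = 2 * (n₁ + k) := by omega
    rw [e]
    exact Dvd.dvd.mul_left hq1 2
  have hq2k : q ∣ 2 * k + 1 := (Nat.dvd_add_right hqN).mp hqmul
  have hpq : p ≤ q := Nat.minFac_le_of_dvd hqp.two_le hqN
  have hqk : q ≤ 2 * k + 1 := Nat.le_of_dvd (by omega) hq2k
  by_contra hne
  have hlt : p < 2 * k + 1 := by omega
  set j := (p - 1) / 2 with hj
  have hjp : p = 2 * j + 1 := by omega
  have hj1 : 1 ≤ j := by omega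
  have hjk : j < k := by omega
  have hpn : p ∣ n₁ + j := by
    have h : p ∣ 2 * (n₁ + j) := by
      have e : 2 * (n₁ + j) = N + p := by omega
      rw [e]
      exact Nat.dvd_add hpd dvd_rfl
    rcases (Nat.Prime.dvd_mul hpp).mp h with h2 | h'
    · have := Nat.le_of_dvd (by omega) h2; omega
    · exact h'
  have hpm : p ∣ 3 * n₁ + j - 1 := by
    have e : 3 * n₁ + j - 1 = (n₁ + j) + N := by omega
    rw [e]
    exact Nat.dvd_add hpn hpd
  have hdg : p ∣ Nat.gcd (n₁ + j) (3 * n₁ + j - 1) := Nat.dvd_gcd hpn hpm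
  rw [hmin j hj1 hjk] at hdg
  have := Nat.le_of_dvd one_pos hdg
  omega
end

section
/- Let n₁ ≥ 2 and let p be the smallest prime divisor of 2n₁−1. Then gcd(3n₁ + (p−1)/2 − 1, n₁ + (p−1)/2) ≥ p; in particular this gcd is greater than 1. -/
theorem stmt12 (n₁ p : ℕ) (hn₁ : 2 ≤ n₁) (hp : p = (2 * n₁ - 1).minFac) :
    p ≤ Nat.gcd (3 * n₁ + (p - 1) / 2 - 1) (n₁ + (p - 1) / 2) ∧
    1 < Nat.gcd (3 * n₁ + (p - 1) / 2 - 1) (n₁ + (p - 1) / 2) := by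
  have hpp : p.Prime := hp ▸ Nat.minFac_prime (by omega)
  have hdvd : p ∣ 2 * n₁ - 1 := hp ▸ Nat.minFac_dvd _
  have h2 := hpp.two_le
  have hne2 : p ≠ 2 := by
    rintro rfl
    obtain ⟨t, ht⟩ := hdvd
    omega
  obtain ⟨m, hm⟩ := hpp.odd_of_ne_two hne2
  have hk : (p - 1) / 2 = m := by omega
  rw [hk]
  have hcop : p.Coprime 2 := (Nat.Prime.coprime_iff_not_dvd hpp).mpr (by
    intro h
    have := Nat.le_of_dvd (by norm_num) h
    omega)
  have hd2 : p ∣ 2 * (n₁ + m) := by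
    have := Nat.dvd_add hdvd (dvd_refl p)
    rwa [show 2 * n₁ - 1 + p = 2 * (n₁ + m) by omega] at this
  have hd1 : p ∣ n₁ + m := hcop.dvd_of_dvd_mul_left hd2
  have hd3 : p ∣ 3 * n₁ + m - 1 := by
    have := Nat.dvd_add hd1 hdvd
    rwa [show n₁ + m + (2 * n₁ - 1) = 3 * n₁ + m - 1 by omega] at this
  have hg : p ∣ Nat.gcd (3 * n₁ + m - 1) (n₁ + m) := Nat.dvd_gcd hd3 hd1
  have hpos : 0 < Nat.gcd (3 * n₁ + m - 1) (n₁ + m) :=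
    Nat.gcd_pos_of_pos_right _ (by omega)
  have := Nat.le_of_dvd hpos hg
  exact ⟨this, by omega⟩
end

section
/- Define a sequence (p_i, N_i) by N₁ = 4, p₁ = 5, and for i ≥ 1: N_{i+1} = N_i + p_i − 1 and p_{i+1} = least prime factor of (N_{i+1} + 1). Then every p_i is prime, and the sequence (p_i) satisfies the recursion p_n = least prime factor of (6 − n + Σ_{i=1}^{n−1} p_i). -/
theorem stmt14 (N p : ℕ → ℕ) (hN1 : N 1 = 4) (hp1 : p 1 = 5)
    (hN : ∀ i, 1 ≤ i → N (i + 1) = N i + p i - 1)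
    (hp : ∀ i, 1 ≤ i → p (i + 1) = (N (i + 1) + 1).minFac) :
    (∀ i, 1 ≤ i → Nat.Prime (p i)) ∧
    ∀ n, 1 ≤ n → p n = ((∑ i ∈ Finset.Icc 1 (n - 1), p i) + 6 - n).minFac := by
  have key : ∀ n, 1 ≤ n → 4 ≤ N n ∧ (p n).Prime ∧
      N n + n = (∑ i ∈ Finset.Icc 1 (n - 1), p i) + 5 ∧ p n = (N n + 1).minFac := by
    intro n hn
    induction n with
    | zero => omega
    | succ k ih =>
      match k, ih with
      | 0, _ =>
        refine ⟨by rw [hN1], by rw [hp1]; norm_num, by simp [hN1], ?_⟩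
        rw [hp1, hN1]; norm_num
      | m + 1, ih =>
        obtain ⟨h4, hpr, hsum, hmf⟩ := ih (by omega)
        have hNk := hN (m + 1) (by omega)
        have hpk := hp (m + 1) (by omega)
        have hp2 := hpr.two_le
        refine ⟨by omega, ?_, ?_, hpk⟩
        · rw [hpk]; exact Nat.minFac_prime (by omega)
        · have hI : (m + 1 + 1 - 1) = m + 1 := rfl
          rw [hI, Finset.sum_Icc_succ_top (by omega : 1 ≤ m + 1)]
          simp only [Nat.add_sub_cancel] at hsum
          omega
  constructor
  · intro i hi; exact (key i hi).2.1
  · intro n hn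
    obtain ⟨h4, hpr, hsum, hmf⟩ := key n hn
    have : (∑ i ∈ Finset.Icc 1 (n - 1), p i) + 6 - n = N n + 1 := by omega
    rw [this, hmf]
end

section
/- Let ν ≥ 0 be even, n₁ ≥ 2, and suppose 2n₁+ν−1 ≥ 3. Let p be the smallest prime divisor of 2n₁+ν−1, and let k be the smallest integer with k ≥ (ν−2)/2, k ≥ 1, such that gcd(n₁+k, 3n₁+k−1+ν) > 1. Then 2k − ν + 1 = p. -/
theorem stmt16 (ν n₁ k p : ℕ) (hν : Even ν) (hn₁ : 2 ≤ n₁)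
    (h3 : 3 ≤ 2 * n₁ + ν - 1) (hp : p = (2 * n₁ + ν - 1).minFac)
    (hk1 : 1 ≤ k) (hk2 : (ν - 2) / 2 ≤ k)
    (hgcd : 1 < Nat.gcd (n₁ + k) (3 * n₁ + k - 1 + ν))
    (hmin : ∀ j, 1 ≤ j → (ν - 2) / 2 ≤ j → j < k →
      Nat.gcd (n₁ + j) (3 * n₁ + j - 1 + ν) = 1) :
    2 * k + 1 = p + ν := by
  obtain ⟨m, hm⟩ := hν
  set N := 2 * n₁ + ν - 1 with hN
  have hNodd : Odd N := ⟨n₁ + m - 1, by omega⟩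
  have hpp : p.Prime := hp ▸ Nat.minFac_prime (by omega)
  have hpdvd : p ∣ N := hp ▸ Nat.minFac_dvd N
  have hp2 : p ≠ 2 := by
    rintro rfl
    have := Nat.odd_iff.mp hNodd
    have := Nat.even_iff.mp ((even_iff_two_dvd).mpr hpdvd)
    omega
  have hp3 : 3 ≤ p := by
    rcases hpp.two_le.lt_or_eq with h | h
    · omega
    · omega
  -- ν - 2 info
  have hk2' : ν ≤ 2 * k + 2 := by omega
  -- Direction 1: p + ν ≤ 2k + 1
  have dir1 : p + ν ≤ 2 * k + 1 := by
    set g := Nat.gcd (n₁ + k) (3 * n₁ + k - 1 + ν) with hg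
    set q := g.minFac with hq
    have hqp : q.Prime := Nat.minFac_prime (by omega)
    have hq1 : q ∣ n₁ + k := (Nat.minFac_dvd g).trans (Nat.gcd_dvd_left _ _)
    have hq2 : q ∣ 3 * n₁ + k - 1 + ν := (Nat.minFac_dvd g).trans (Nat.gcd_dvd_right _ _)
    have hqN : q ∣ N := by
      have : 3 * n₁ + k - 1 + ν = (n₁ + k) + N := by omega
      rw [this] at hq2
      exact (Nat.dvd_add_right hq1).mp hq2
    have hq2n : q ∣ 2 * (n₁ + k) := Dvd.dvd.mul_left hq1 2
    by_cases hcase : ν ≤ 2 * k + 1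
    · -- q ∣ 2k+1-ν
      have hsub : q ∣ 2 * k + 1 - ν := by
        have heq : 2 * k + 1 - ν = 2 * (n₁ + k) - N := by omega
        rw [heq]
        exact Nat.dvd_sub hq2n hqN
      have hne : 2 * k + 1 ≠ ν := by omega
      have hpos : 0 < 2 * k + 1 - ν := by omega
      have hqle : q ≤ 2 * k + 1 - ν := Nat.le_of_dvd hpos hsub
      have hpq : p ≤ q := hp ▸ Nat.minFac_le_of_dvd hqp.two_le hqN
      omega
    · -- then 2k+1 = ν - 1, so 2(n₁+k) = N - 1
      exfalso
      have h1 : 2 * k + 1 = ν - 1 := by omega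
      have : q ∣ 1 := by
        have heq : (1 : ℕ) = N - 2 * (n₁ + k) := by omega
        rw [heq]
        exact Nat.dvd_sub hqN hq2n
      exact hqp.one_lt.ne' (Nat.dvd_one.mp this)
  -- Direction 2: 2k + 1 ≤ p + ν
  have dir2 : 2 * k + 1 ≤ p + ν := by
    by_contra hcon
    push_neg at hcon
    set k₀ := (p + ν - 1) / 2 with hk₀
    have h2k₀ : 2 * k₀ = p + ν - 1 := by
      obtain ⟨r, hr⟩ := hpp.odd_of_ne_two hp2
      omega
    have hk₀1 : 1 ≤ k₀ := by omega
    have hk₀2 : (ν - 2) / 2 ≤ k₀ := by omega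
    have hk₀k : k₀ < k := by omega
    have hz := hmin k₀ hk₀1 hk₀2 hk₀k
    -- but p divides both
    have hpdvd2 : p ∣ 2 * (n₁ + k₀) := by
      have : 2 * (n₁ + k₀) = N + p := by omega
      rw [this]
      exact Nat.dvd_add hpdvd dvd_rfl
    have hp1 : p ∣ n₁ + k₀ := by
      have hcop : Nat.Coprime p 2 := (Nat.coprime_primes hpp Nat.prime_two).mpr hp2
      exact (Nat.Coprime.dvd_of_dvd_mul_left hcop hpdvd2)
    have hp2' : p ∣ 3 * n₁ + k₀ - 1 + ν := by
      have : 3 * n₁ + k₀ - 1 + ν = (n₁ + k₀) + N := by omega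
      rw [this]
      exact Nat.dvd_add hp1 hpdvd
    have : p ∣ Nat.gcd (n₁ + k₀) (3 * n₁ + k₀ - 1 + ν) := Nat.dvd_gcd hp1 hp2'
    rw [hz] at this
    have := Nat.dvd_one.mp this
    omega
  omega
end
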